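/- Let G = (N, P, S) be an SL-HR grammar, and for each nonterminal A let sk(A) be the skeleton graph of val(A), regarded as a hypergraph on rank(A) external nodes with simple rank-2 edges. Let S' be the graph obtained from the start graph S by replacing every nonterminal edge e by sk(lab(e)) (identifying the external nodes of sk(lab(e)) with the attachment nodes of e in order). Then for all nodes u, v of S: v is reachable from u in val(G) if and only if v is reachable from u in S'. (This equivalence is the correctness statement underlying the result that reachability between two given nodes of val(G) can be decided in time linear in |G|.) -/

import Mathlib

open scoped Classical

/-- A hypergraph over a label type `L`: nodes and edges are natural-number
identifiers, `att` gives the attachment sequence of an edge, `lab` its label,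
and `ext` is the sequence of external nodes. -/
structure HGraph (L : Type) where
  V : Finset ℕ
  E : Finset ℕ
  att : ℕ → List ℕ
  lab : ℕ → L
  ext : List ℕ

namespace HGraph

variable {L : Type}

/-- Well-formedness of a hypergraph over a ranked alphabet `rk`:
nodes nonempty, attachments are nonempty repetition-free sequences of nodes
whose length is the rank of the label, and the external nodes form a
repetition-free sequence of nodes. -/
def WF (rk : L → ℕ) (g : HGraph L) : Prop :=
  g.V.Nonempty ∧
    (∀ e ∈ g.E, (∀ v ∈ g.att e, v ∈ g.V) ∧ (g.att e).Nodup ∧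
      (g.att e).length = rk (g.lab e) ∧ g.att e ≠ []) ∧
    (∀ v ∈ g.ext, v ∈ g.V) ∧ g.ext.Nodup

/-- The edge size `|g|_E`: simple edges (rank ≤ 2) count 1, a hyperedge of
rank `n > 2` counts `n`. -/
def esize (g : HGraph L) : ℕ :=
  ∑ e ∈ g.E, (if (g.att e).length ≤ 2 then 1 else (g.att e).length)

/-- The size `|g| = |g|_V + |g|_E`. -/
def size (g : HGraph L) : ℕ := g.V.card + g.esize

/-- Isomorphism of hypergraphs: bijections on nodes and edges preserving
attachment, labels and external nodes. -/
def Isomorphic (g h : HGraph L) : Prop :=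
  ∃ f fe : ℕ → ℕ,
    Set.BijOn f ↑g.V ↑h.V ∧ Set.BijOn fe ↑g.E ↑h.E ∧
    (∀ e ∈ g.E, h.att (fe e) = (g.att e).map f) ∧
    (∀ e ∈ g.E, h.lab (fe e) = g.lab e) ∧
    h.ext = g.ext.map f

end HGraph

/-- `IsReplacement g e₀ h g'` holds if `g'` is (a realization of) the
replacement `g[e₀/h]`: the edge `e₀` is removed from `g`, a disjoint copy of
`h` (renamed via `ρ` on nodes and `η` on edges) is adjoined, and the i-th
external node of `h` is identified with the i-th attachment node of `e₀`. -/
def IsReplacement {L : Type} (g : HGraph L) (e₀ : ℕ) (h : HGraph L)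
    (g' : HGraph L) : Prop :=
  ∃ ρ η : ℕ → ℕ,
    Set.InjOn ρ ↑h.V ∧ Set.InjOn η ↑h.E ∧
    (∀ v ∈ h.V, v ∉ h.ext → ρ v ∉ g.V) ∧
    h.ext.map ρ = g.att e₀ ∧
    (∀ e ∈ h.E, η e ∉ g.E) ∧
    g'.V = g.V ∪ h.V.image ρ ∧
    g'.E = g.E.erase e₀ ∪ h.E.image η ∧
    (∀ e ∈ g.E.erase e₀, g'.att e = g.att e ∧ g'.lab e = g.lab e) ∧
    (∀ e ∈ h.E, g'.att (η e) = (h.att e).map ρ ∧ g'.lab (η e) = h.lab e) ∧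
    g'.ext = g.ext

/-- An HR grammar over a terminal alphabet `T`: nonterminals are natural
numbers (`NT`), `rkN` gives their ranks, `rhs` the unique right-hand side of
each nonterminal, and `S` is the start graph.  Labels of graphs occurring in
the grammar are `T ⊕ ℕ` (terminals on the left, nonterminals on the right). -/
structure HRGrammar (T : Type) where
  NT : Finset ℕ
  rkN : ℕ → ℕ
  rhs : ℕ → HGraph (T ⊕ ℕ)
  S : HGraph (T ⊕ ℕ)

namespace HRGrammar

variable {T : Type}

/-- The rank function on labels `T ⊕ ℕ` induced by terminal ranks `rkT`. -/
def rk (G : HRGrammar T) (rkT : T → ℕ) : T ⊕ ℕ → ℕ := Sum.elim rkT G.rkN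

/-- Well-formedness of an HR grammar over ranked alphabet `rkT`:
all ranks are ≥ 1, the start graph and all right-hand sides are well-formed,
`rank(A) = rank(rhs A)` for all nonterminals, and all nonterminal labels
occurring in the grammar are declared nonterminals. -/
def WF (G : HRGrammar T) (rkT : T → ℕ) : Prop :=
  (∀ a : T, 1 ≤ rkT a) ∧ (∀ A ∈ G.NT, 1 ≤ G.rkN A) ∧
    G.S.WF (G.rk rkT) ∧
    (∀ A ∈ G.NT, (G.rhs A).WF (G.rk rkT) ∧ (G.rhs A).ext.length = G.rkN A) ∧
    (∀ e ∈ G.S.E, ∀ B : ℕ, G.S.lab e = Sum.inr B → B ∈ G.NT) ∧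
    (∀ A ∈ G.NT, ∀ e ∈ (G.rhs A).E, ∀ B : ℕ, (G.rhs A).lab e = Sum.inr B → B ∈ G.NT)

/-- The dependency relation: `dep G A B` iff a `B`-labeled edge occurs in
`rhs(A)`. -/
def dep (G : HRGrammar T) (A B : ℕ) : Prop :=
  A ∈ G.NT ∧ B ∈ G.NT ∧ ∃ e ∈ (G.rhs A).E, (G.rhs A).lab e = Sum.inr B

/-- Straight-line condition: the dependency relation is acyclic, and every
nonterminal occurs in some derivation from the start graph (i.e., it is
reachable, via dependencies, from a nonterminal occurring in `S`).  (Every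
nonterminal has exactly one rule by construction, since `rhs` is a
function.) -/
def SL (G : HRGrammar T) : Prop :=
  (∀ A : ℕ, ¬ Relation.TransGen G.dep A A) ∧
    (∀ A ∈ G.NT, ∃ B : ℕ, (∃ e ∈ G.S.E, G.S.lab e = Sum.inr B) ∧
      Relation.ReflTransGen G.dep B A)

/-- One derivation step: replace some nonterminal edge by its right-hand
side. -/
def Derive (G : HRGrammar T) (g g' : HGraph (T ⊕ ℕ)) : Prop :=
  ∃ e ∈ g.E, ∃ A ∈ G.NT, g.lab e = Sum.inr A ∧ IsReplacement g e (G.rhs A) g'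

/-- A graph is terminal if all its edge labels are terminal symbols. -/
def Terminal (g : HGraph (T ⊕ ℕ)) : Prop :=
  ∀ e ∈ g.E, ∃ a : T, g.lab e = Sum.inl a

/-- The language of the grammar: all terminal graphs derivable from `S`. -/
def Lang (G : HRGrammar T) : Set (HGraph (T ⊕ ℕ)) :=
  { g | Relation.ReflTransGen G.Derive G.S g ∧ Terminal g }

/-- The size `|G| = |S| + Σ_{(A,g) ∈ P} |g|`. -/
def size (G : HRGrammar T) : ℕ :=
  G.S.size + ∑ A ∈ G.NT, (G.rhs A).size

end HRGrammar

namespace HGraph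

variable {L : Type}

/-- A path from `s` to `t` in a hypergraph: a nonempty sequence of edges,
each edge directed from its first attachment node to its remaining attachment
nodes, starting at `s` and ending at `t`. -/
def IsPath (g : HGraph L) (p : List ℕ) (s t : ℕ) : Prop :=
  p ≠ [] ∧ (∀ e ∈ p, e ∈ g.E) ∧
    (∃ e, p.head? = some e ∧ (g.att e).head? = some s) ∧
    List.Chain' (fun e e' => ∃ v, (g.att e').head? = some v ∧ v ∈ (g.att e).tail) p ∧
    (∃ e, p.getLast? = some e ∧ t ∈ (g.att e).tail)

/-- `t` is reachable from `s`: either `t = s` or there is a path. -/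
def Reaches (g : HGraph L) (s t : ℕ) : Prop :=
  s = t ∨ ∃ p : List ℕ, g.IsPath p s t

/-- An internal path: all nodes on it (the first attachment nodes of its
second, …, last edge) are internal. -/
def InternalPath (g : HGraph L) (p : List ℕ) (s t : ℕ) : Prop :=
  g.IsPath p s t ∧ ∀ e ∈ p.tail, ∀ v : ℕ, (g.att e).head? = some v → v ∉ g.ext

end HGraph

namespace HRGrammar

variable {T : Type}

/-- The handle of a nonterminal `A`: `rank(A)` external nodes and a single
`A`-labeled edge attached to all of them in order. -/
def handle (G : HRGrammar T) (A : ℕ) : HGraph (T ⊕ ℕ) where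
  V := Finset.range (G.rkN A)
  E := {0}
  att := fun _ => List.range (G.rkN A)
  lab := fun _ => Sum.inr A
  ext := List.range (G.rkN A)

/-- The skeleton relation of `val(A)` on positions of external nodes:
`skRel G A i j` iff the `j`-th external node is reachable from the `i`-th
external node in `val(A)` (the terminal graph derived from `handle(A)`;
its external nodes are `0, …, rank(A) - 1`). -/
def skRel (G : HRGrammar T) (A : ℕ) (i j : ℕ) : Prop :=
  i < G.rkN A ∧ j < G.rkN A ∧
    ∃ h : HGraph (T ⊕ ℕ),
      Relation.ReflTransGen G.Derive (G.handle A) h ∧ Terminal h ∧ h.Reaches i j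

/-- The graph `S'` obtained from the start graph `S` by replacing every
nonterminal edge `e` (labeled `A`) by the skeleton graph `sk(A)`, identifying
the external nodes of `sk(A)` with the attachment nodes of `e` in order.
Terminal edges `e` of `S` keep their data (stored at id `2·e`); the skeleton
edge for a nonterminal edge `e` and positions `i, j` with `skRel G A i j` is a
simple `ℓ`-labeled edge between the `i`-th and `j`-th attachment node of `e`
(stored at id `2·⟨e,⟨i,j⟩⟩ + 1`). -/
noncomputable def startSk (G : HRGrammar T) (ℓ : T ⊕ ℕ) : HGraph (T ⊕ ℕ) where
  V := G.S.V
  E :=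
    ((G.S.E.filter fun e => ∀ A ∈ G.NT, G.S.lab e ≠ Sum.inr A).image fun e => 2 * e) ∪
    (((G.S.E ×ˢ (Finset.range (G.S.E.sup fun e => (G.S.att e).length) ×ˢ
          Finset.range (G.S.E.sup fun e => (G.S.att e).length))).filter
        fun p => ∃ A ∈ G.NT, G.S.lab p.1 = Sum.inr A ∧ skRel G A p.2.1 p.2.2).image
      fun p => 2 * Nat.pair p.1 (Nat.pair p.2.1 p.2.2) + 1)
  att := fun k =>
    if k % 2 = 0 then G.S.att (k / 2)
    else
      [(G.S.att (Nat.unpair ((k - 1) / 2)).1).getD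
          (Nat.unpair (Nat.unpair ((k - 1) / 2)).2).1 0,
       (G.S.att (Nat.unpair ((k - 1) / 2)).1).getD
          (Nat.unpair (Nat.unpair ((k - 1) / 2)).2).2 0]
  lab := fun k => if k % 2 = 0 then G.S.lab (k / 2) else ℓ
  ext := G.S.ext

end HRGrammar

/-! Read every nonterminal edge labelled `A` as its skeleton: a step from its `i`-th to its `j`-th
attachment node whenever `skRel G A i j`. This reachability is invariant under derivation steps,
because replacing an `A`-edge by a copy of `rhs A` changes nothing between the old nodes as soon
as the skeleton of `A` is reachability between the external nodes of `rhs A` (in the same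
reading). That property holds for all nonterminals by induction on the number of their
descendants in the acyclic dependency relation; since `skRel` is read off a terminal graph
derived from `handle A`, this also uses that every sentential form derives a terminal graph.
On the start graph the skeleton reading is reachability in `S'`, on a terminal graph it is plain
reachability. -/

open Relation

theorem List.getElem?_eq_some_iff_getD_eq {l : List ℕ} {i x : ℕ} (hi : i < l.length) :
    l[i]? = some x ↔ l.getD i 0 = x := by
  rw [List.getD_eq_getElem _ _ hi, List.getElem?_eq_getElem hi, Option.some_inj]

namespace Relation

variable {α β : Type*}

theorem reflTransGen_map_iff_of_injOn {t : β → β → Prop} {f : β → α} {D : Set β}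
    (htD : ∀ x y, t x y → x ∈ D ∧ y ∈ D) (hf : Set.InjOn f D) {x y : β}
    (hx : x ∈ D) (hy : y ∈ D) :
    ReflTransGen (Relation.Map t f f) (f x) (f y) ↔ ReflTransGen t x y := by
  refine ⟨fun h => ?_, fun h => h.lift f fun a b hab => ⟨a, b, hab, rfl, rfl⟩⟩
  suffices ∀ a, ReflTransGen (Relation.Map t f f) a (f y) → ∀ x ∈ D, f x = a →
      ReflTransGen t x y from this _ h x hx rfl
  intro a ha
  induction ha using ReflTransGen.head_induction_on with
  | refl => intro x hx hxy; rw [hf hx hy hxy]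
  | head hac _ ih =>
    obtain ⟨x', z, hx'z, rfl, rfl⟩ := hac
    intro x hx hxx'
    rw [hf hx (htD _ _ hx'z).1 hxx']
    exact .head hx'z (ih z (htD _ _ hx'z).2 rfl)

/-- Gluing a gadget: `q` is `r` plus shortcut edges between the images of the ports `X`, one for
each `t`-path between them, and `r'` is `r` plus a copy of `t` itself. If the copy meets the host
nodes `P` only in its ports, `q` and `r'` have the same reachability on `P`. -/
theorem reflTransGen_iff_of_glue {r q r' : α → α → Prop} {t : β → β → Prop} {f : β → α}
    {P : Set α} {D X : Set β}
    (hq : ∀ a b, q a b ↔ r a b ∨ ∃ x ∈ X, ∃ y ∈ X, f x = a ∧ f y = b ∧ ReflTransGen t x y)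
    (hr' : ∀ a b, r' a b ↔ r a b ∨ Relation.Map t f f a b)
    (hrP : ∀ a b, r a b → a ∈ P ∧ b ∈ P) (htD : ∀ x y, t x y → x ∈ D ∧ y ∈ D)
    (hf : Set.InjOn f D) (hport : ∀ x ∈ D, f x ∈ P ↔ x ∈ X)
    {a b : α} (ha : a ∈ P) (hb : b ∈ P) :
    ReflTransGen q a b ↔ ReflTransGen r' a b := by
  refine ⟨fun h => reflTransGen_closed (fun a b hab => ?_) a b h, fun h => ?_⟩
  · rcases (hq a b).1 hab with hab | ⟨x, -, y, -, rfl, rfl, hxy⟩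
    · exact .single ((hr' a b).2 (.inl hab))
    · exact ReflTransGen.mono (fun a b h => (hr' a b).2 (.inr h)) _ _
        (hxy.lift f fun x y h => ⟨x, y, h, rfl, rfl⟩)
  -- An `r'`-path that starts inside the copy leaves it through a port.
  suffices key : ∀ a, ReflTransGen r' a b → (a ∈ P → ReflTransGen q a b) ∧
      ∀ x ∈ D, f x = a → ∃ z ∈ X, ReflTransGen t x z ∧ ReflTransGen q (f z) b from
    (key a h).1 ha
  intro a h
  induction h using ReflTransGen.head_induction_on with
  | refl =>
    refine ⟨fun _ => .refl, fun x hx hxb => ⟨x, (hport x hx).1 (hxb ▸ hb), .refl, ?_⟩⟩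
    rw [hxb]
  | @head a c hac _ ih =>
    rcases (hr' a c).1 hac with hac | ⟨x', z, hx'z, rfl, rfl⟩
    · have hab : ReflTransGen q a b := .head ((hq a c).2 (.inl hac)) (ih.1 (hrP _ _ hac).2)
      refine ⟨fun _ => hab, fun x hx hxa => ⟨x, (hport x hx).1 ?_, .refl, hxa ▸ hab⟩⟩
      exact hxa ▸ (hrP _ _ hac).1
    · obtain ⟨w, hw, hzw, hwb⟩ := ih.2 z (htD _ _ hx'z).2 rfl
      have hx'D := (htD _ _ hx'z).1
      refine ⟨fun hx' => .head ((hq _ _).2 (.inr ?_)) hwb, fun x hx hxx' => ⟨w, hw, ?_, hwb⟩⟩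
      · exact ⟨x', (hport x' hx'D).1 hx', w, hw, rfl, rfl, .head hx'z hzw⟩
      · rw [hf hx hx'D hxx']
        exact .head hx'z hzw

end Relation

structure IsReplacementVia {L : Type} (g : HGraph L) (e₀ : ℕ) (h g' : HGraph L)
    (ρ η : ℕ → ℕ) : Prop where
  injOn_V : Set.InjOn ρ ↑h.V
  injOn_E : Set.InjOn η ↑h.E
  fresh_V : ∀ v ∈ h.V, v ∉ h.ext → ρ v ∉ g.V
  map_ext : h.ext.map ρ = g.att e₀
  fresh_E : ∀ e ∈ h.E, η e ∉ g.E
  V_eq : g'.V = g.V ∪ h.V.image ρ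
  E_eq : g'.E = g.E.erase e₀ ∪ h.E.image η
  old : ∀ e ∈ g.E.erase e₀, g'.att e = g.att e ∧ g'.lab e = g.lab e
  copy : ∀ e ∈ h.E, g'.att (η e) = (h.att e).map ρ ∧ g'.lab (η e) = h.lab e
  ext_eq : g'.ext = g.ext

theorem IsReplacementVia.mem_E_iff {L : Type} {g h g' : HGraph L} {e₀ : ℕ} {ρ η : ℕ → ℕ}
    (hr : IsReplacementVia g e₀ h g' ρ η) {e : ℕ} :
    e ∈ g'.E ↔ e ∈ g.E.erase e₀ ∨ ∃ f ∈ h.E, η f = e := by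
  rw [hr.E_eq, Finset.mem_union, Finset.mem_image]

theorem isReplacement_iff_exists_via {L : Type} {g h g' : HGraph L} {e₀ : ℕ} :
    IsReplacement g e₀ h g' ↔ ∃ ρ η, IsReplacementVia g e₀ h g' ρ η :=
  ⟨fun ⟨ρ, η, h₁, h₂, h₃, h₄, h₅, h₆, h₇, h₈, h₉, h₁₀⟩ =>
      ⟨ρ, η, h₁, h₂, h₃, h₄, h₅, h₆, h₇, h₈, h₉, h₁₀⟩,
    fun ⟨ρ, η, h₁, h₂, h₃, h₄, h₅, h₆, h₇, h₈, h₉, h₁₀⟩ =>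
      ⟨ρ, η, h₁, h₂, h₃, h₄, h₅, h₆, h₇, h₈, h₉, h₁₀⟩⟩

namespace HGraph

variable {L : Type} {g : HGraph L}

def step (g : HGraph L) (x y : ℕ) : Prop :=
  ∃ e ∈ g.E, (g.att e).head? = some x ∧ y ∈ (g.att e).tail

theorem isPath_singleton_iff {e s t : ℕ} :
    g.IsPath [e] s t ↔ e ∈ g.E ∧ (g.att e).head? = some s ∧ t ∈ (g.att e).tail := by
  refine ⟨fun ⟨_, hE, ⟨e₁, he₁, hs⟩, _, ⟨e₂, he₂, ht⟩⟩ => ?_, fun ⟨he, hs, ht⟩ =>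
    ⟨by simp, by simpa using he, ⟨e, rfl, hs⟩, List.isChain_singleton _, ⟨e, rfl, ht⟩⟩⟩
  obtain rfl : e₁ = e := by simpa using he₁.symm
  obtain rfl : e₂ = e₁ := by simpa using he₂.symm
  exact ⟨hE _ (by simp), hs, ht⟩

theorem IsPath.append {p q : List ℕ} {s m t : ℕ} (hp : g.IsPath p s m) (hq : g.IsPath q m t) :
    g.IsPath (p ++ q) s t := by
  obtain ⟨hpne, hpE, ⟨e₁, he₁, hs⟩, hpc, ⟨e₂, he₂, hm⟩⟩ := hp
  obtain ⟨hqne, hqE, ⟨f₁, hf₁, hmh⟩, hqc, ⟨f₂, hf₂, ht⟩⟩ := hq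
  refine ⟨by simp [hpne], ?_, ⟨e₁, by simp [he₁], hs⟩, ?_, ⟨f₂, ?_, ht⟩⟩
  · simpa using fun e he => he.elim (hpE e) (hqE e)
  · refine List.IsChain.append hpc hqc fun a ha b hb => ?_
    obtain rfl : a = e₂ := by simpa [he₂] using ha.symm
    obtain rfl : b = f₁ := by simpa [hf₁] using hb.symm
    exact ⟨m, hmh, hm⟩
  · rwa [List.getLast?_append_of_ne_nil _ hqne]

theorem IsPath.cons_cons {e e' : ℕ} {p : List ℕ} {s t : ℕ} (h : g.IsPath (e :: e' :: p) s t) :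
    ∃ v, g.step s v ∧ g.IsPath (e' :: p) v t := by
  obtain ⟨-, hE, ⟨e₁, he₁, hs⟩, hc, ⟨e₂, he₂, ht⟩⟩ := h
  obtain rfl : e₁ = e := by simpa using he₁.symm
  obtain ⟨⟨v, hv, hve⟩, hc'⟩ := List.isChain_cons_cons.mp hc
  exact ⟨v, ⟨e₁, hE _ (by simp), hs, hve⟩,
    ⟨by simp, fun f hf => hE f (by simp_all), ⟨e', rfl, hv⟩, hc', ⟨e₂, by simpa using he₂, ht⟩⟩⟩

theorem reaches_iff_reflTransGen {s t : ℕ} : g.Reaches s t ↔ ReflTransGen g.step s t := by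
  constructor
  · rintro (rfl | ⟨p, hp⟩)
    · exact .refl
    induction p generalizing s with
    | nil => exact absurd rfl hp.1
    | cons e p ih =>
      match p, hp with
      | [], hp => exact .single ⟨e, isPath_singleton_iff.1 hp⟩
      | e' :: p, hp =>
        obtain ⟨v, hsv, hvt⟩ := hp.cons_cons
        exact .head hsv (ih hvt)
  · intro h
    induction h with
    | refl => exact .inl rfl
    | tail _ hbc ih =>
      obtain ⟨e, hbc⟩ := hbc
      rcases ih with rfl | ⟨p, hp⟩
      · exact .inr ⟨[e], isPath_singleton_iff.2 hbc⟩
      · exact .inr ⟨p ++ [e], hp.append (isPath_singleton_iff.2 hbc)⟩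


/-- The node renaming of a canonical replacement `g[e₀/h]`: external nodes of `h` go to the
attachment of `e₀`, internal ones are shifted past every node of `g`. -/
def replNode (g : HGraph L) (e₀ : ℕ) (h : HGraph L) (v : ℕ) : ℕ :=
  if v ∈ h.ext then (g.att e₀).getD (h.ext.idxOf v) 0 else g.V.sup id + 1 + v

/-- A canonical replacement `g[e₀/h]`; edges of `h` are shifted past every edge of `g`. -/
def replaceEdge (g : HGraph L) (e₀ : ℕ) (h : HGraph L) : HGraph L where
  V := g.V ∪ h.V.image (g.replNode e₀ h)
  E := g.E.erase e₀ ∪ h.E.image (g.E.sup id + 1 + ·)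
  att f := if g.E.sup id + 1 ≤ f then (h.att (f - (g.E.sup id + 1))).map (g.replNode e₀ h)
    else g.att f
  lab f := if g.E.sup id + 1 ≤ f then h.lab (f - (g.E.sup id + 1)) else g.lab f
  ext := g.ext

theorem lt_sup_id_add_one {s : Finset ℕ} {v : ℕ} (hv : v ∈ s) : v < s.sup id + 1 :=
  Nat.lt_succ_of_le (Finset.le_sup (f := id) hv)

section replaceEdge

variable {h : HGraph L} {e₀ : ℕ}

theorem replNode_of_mem_ext (hlen : h.ext.length = (g.att e₀).length) {v : ℕ} (hv : v ∈ h.ext) :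
    g.replNode e₀ h v = (g.att e₀)[h.ext.idxOf v]'(hlen ▸ List.idxOf_lt_length_iff.2 hv) := by
  rw [replNode, if_pos hv, List.getD_eq_getElem]

theorem map_replNode_ext (hlen : h.ext.length = (g.att e₀).length) (hext : h.ext.Nodup) :
    h.ext.map (g.replNode e₀ h) = g.att e₀ := by
  refine List.ext_getElem (by simp [hlen]) fun k hk _ => ?_
  rw [List.getElem_map, replNode_of_mem_ext hlen (List.getElem_mem _)]
  simp only [hext.idxOf_getElem]

theorem replNode_injective (hlen : h.ext.length = (g.att e₀).length) (hatt : (g.att e₀).Nodup)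
    (hV : ∀ v ∈ g.att e₀, v ∈ g.V) : Function.Injective (g.replNode e₀ h) := by
  have hport : ∀ v ∈ h.ext, g.replNode e₀ h v < g.V.sup id + 1 := fun v hv =>
    lt_sup_id_add_one (hV _ (by rw [replNode_of_mem_ext hlen hv]; exact List.getElem_mem _))
  intro a b hab
  by_cases ha : a ∈ h.ext <;> by_cases hb : b ∈ h.ext
  · rw [replNode_of_mem_ext hlen ha, replNode_of_mem_ext hlen hb, hatt.getElem_inj_iff,
      List.idxOf_inj ha] at hab
    exact hab
  · have := hport a ha; rw [hab, replNode, if_neg hb] at this; omega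
  · have := hport b hb; rw [← hab, replNode, if_neg ha] at this; omega
  · rw [replNode, replNode, if_neg ha, if_neg hb] at hab; omega

theorem isReplacementVia_replaceEdge (hlen : h.ext.length = (g.att e₀).length)
    (hext : h.ext.Nodup) (hatt : (g.att e₀).Nodup) (hV : ∀ v ∈ g.att e₀, v ∈ g.V) :
    IsReplacementVia g e₀ h (g.replaceEdge e₀ h) (g.replNode e₀ h) (g.E.sup id + 1 + ·) where
  injOn_V := (replNode_injective hlen hatt hV).injOn
  injOn_E _ _ _ _ hab := by simpa using hab
  fresh_V v _ hv hmem := by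
    have := lt_sup_id_add_one hmem
    rw [replNode, if_neg hv] at this
    omega
  map_ext := map_replNode_ext hlen hext
  fresh_E e _ hmem := by have := lt_sup_id_add_one hmem; omega
  V_eq := rfl
  E_eq := rfl
  old e he := by
    have := lt_sup_id_add_one (Finset.mem_of_mem_erase he)
    simp only [replaceEdge, if_neg (show ¬ g.E.sup id + 1 ≤ e by omega), and_self]
  copy e _ := by simp only [replaceEdge, if_pos (Nat.le_add_right _ e), Nat.add_sub_cancel_left,
    and_self]
  ext_eq := rfl

end replaceEdge

end HGraph

namespace HRGrammar

variable {T : Type} {G : HRGrammar T} {rkT : T → ℕ} {g g' g₁ h : HGraph (T ⊕ ℕ)}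
  {e₀ A : ℕ} {ρ η : ℕ → ℕ}

theorem WF.rhs_wf (hWF : G.WF rkT) (hA : A ∈ G.NT) : (G.rhs A).WF (G.rk rkT) :=
  (hWF.2.2.2.1 A hA).1

theorem WF.length_ext (hWF : G.WF rkT) (hA : A ∈ G.NT) : (G.rhs A).ext.length = G.rkN A :=
  (hWF.2.2.2.1 A hA).2

theorem WF.dep_of_lab_rhs (hWF : G.WF rkT) (hA : A ∈ G.NT) {e B : ℕ} (he : e ∈ (G.rhs A).E)
    (hB : (G.rhs A).lab e = .inr B) : G.dep A B :=
  ⟨hA, hWF.2.2.2.2.2 A hA e he B hB, e, he, hB⟩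

structure IsSentential (G : HRGrammar T) (rkT : T → ℕ) (g : HGraph (T ⊕ ℕ)) : Prop where
  att_mem : ∀ e ∈ g.E, ∀ v ∈ g.att e, v ∈ g.V
  nodup_att : ∀ e ∈ g.E, (g.att e).Nodup
  length_att : ∀ e ∈ g.E, (g.att e).length = G.rk rkT (g.lab e)

def NTLabelsIn (g : HGraph (T ⊕ ℕ)) (𝒩 : Set ℕ) : Prop :=
  ∀ e ∈ g.E, ∀ B, g.lab e = .inr B → B ∈ 𝒩

theorem WF.ntLabelsIn_start (hWF : G.WF rkT) : NTLabelsIn G.S G.NT :=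
  hWF.2.2.2.2.1

theorem IsSentential.length_att_of_lab (hg : G.IsSentential rkT g) (he : e₀ ∈ g.E)
    (hlab : g.lab e₀ = .inr A) : (g.att e₀).length = G.rkN A := by
  rw [hg.length_att e₀ he, hlab]; rfl

theorem isSentential_start (hWF : G.WF rkT) : G.IsSentential rkT G.S where
  att_mem e he := (hWF.2.2.1.2.1 e he).1
  nodup_att e he := (hWF.2.2.1.2.1 e he).2.1
  length_att e he := (hWF.2.2.1.2.1 e he).2.2.1

theorem isSentential_handle : G.IsSentential rkT (G.handle A) where
  att_mem _ _ := by simp [handle]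
  nodup_att _ _ := List.nodup_range
  length_att _ _ := by simp [handle, rk]

theorem IsSentential.replace (hWF : G.WF rkT) (hA : A ∈ G.NT) (hg : G.IsSentential rkT g)
    (hr : IsReplacementVia g e₀ (G.rhs A) g' ρ η) : G.IsSentential rkT g' := by
  have hrhs := (hWF.rhs_wf hA).2.1
  refine ⟨fun e he => ?_, fun e he => ?_, fun e he => ?_⟩ <;>
    rcases hr.mem_E_iff.1 he with he | ⟨f, hf, rfl⟩
  · rw [(hr.old e he).1, hr.V_eq]
    exact fun v hv => Finset.mem_union_left _ (hg.att_mem e (Finset.mem_of_mem_erase he) v hv)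
  · rw [(hr.copy f hf).1, hr.V_eq]
    intro v hv
    obtain ⟨w, hw, rfl⟩ := List.mem_map.1 hv
    exact Finset.mem_union_right _ (Finset.mem_image_of_mem ρ ((hrhs f hf).1 w hw))
  · rw [(hr.old e he).1]; exact hg.nodup_att e (Finset.mem_of_mem_erase he)
  · rw [(hr.copy f hf).1]
    exact (hrhs f hf).2.1.map_on fun a ha b hb =>
      hr.injOn_V ((hrhs f hf).1 a ha) ((hrhs f hf).1 b hb)
  · rw [(hr.old e he).1, (hr.old e he).2]; exact hg.length_att e (Finset.mem_of_mem_erase he)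
  · rw [(hr.copy f hf).1, (hr.copy f hf).2, List.length_map]; exact (hrhs f hf).2.2.1

theorem ntLabelsIn_replace (hWF : G.WF rkT) (hA : A ∈ G.NT) {𝒩 : Set ℕ}
    (hl : ∀ e ∈ g.E.erase e₀, ∀ B, g.lab e = .inr B → B ∈ 𝒩) (hdep : ∀ B, G.dep A B → B ∈ 𝒩)
    (hr : IsReplacementVia g e₀ (G.rhs A) g' ρ η) : NTLabelsIn g' 𝒩 := by
  intro e he B hB
  rcases hr.mem_E_iff.1 he with he | ⟨f, hf, rfl⟩
  · exact hl e he B ((hr.old e he).2 ▸ hB)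
  · exact hdep B (hWF.dep_of_lab_rhs hA hf ((hr.copy f hf).2 ▸ hB))

theorem Derive.exists_via (hd : G.Derive g g') :
    ∃ e₀ ∈ g.E, ∃ A ∈ G.NT, g.lab e₀ = .inr A ∧
      ∃ ρ η, IsReplacementVia g e₀ (G.rhs A) g' ρ η := by
  obtain ⟨e₀, he₀, A, hA, hlab, hr⟩ := hd
  exact ⟨e₀, he₀, A, hA, hlab, isReplacement_iff_exists_via.1 hr⟩

theorem derive_of_via (he₀ : e₀ ∈ g.E) (hA : A ∈ G.NT) (hlab : g.lab e₀ = .inr A)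
    (hr : IsReplacementVia g e₀ (G.rhs A) g' ρ η) : G.Derive g g' :=
  ⟨e₀, he₀, A, hA, hlab, isReplacement_iff_exists_via.2 ⟨ρ, η, hr⟩⟩

theorem IsSentential.derives (hWF : G.WF rkT) (hg : G.IsSentential rkT g)
    (hd : ReflTransGen G.Derive g h) : G.IsSentential rkT h := by
  induction hd with
  | refl => exact hg
  | tail _ hd ih =>
    obtain ⟨_, -, A, hA, -, _, _, hr⟩ := hd.exists_via
    exact ih.replace hWF hA hr

theorem NTLabelsIn.derives (hWF : G.WF rkT) {𝒩 : Set ℕ}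
    (hclosed : ∀ A ∈ 𝒩, ∀ B, G.dep A B → B ∈ 𝒩) (hl : NTLabelsIn g 𝒩)
    (hd : ReflTransGen G.Derive g h) : NTLabelsIn h 𝒩 := by
  induction hd with
  | refl => exact hl
  | tail _ hd ih =>
    obtain ⟨e₀, he₀, A, hA, hlab, _, _, hr⟩ := hd.exists_via
    exact ntLabelsIn_replace hWF hA (fun e he => ih e (Finset.mem_of_mem_erase he))
      (hclosed A (ih e₀ he₀ A hlab)) hr

theorem V_subset_of_derives (hd : ReflTransGen G.Derive g h) : g.V ⊆ h.V := by
  induction hd with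
  | refl => exact subset_rfl
  | tail _ hd ih =>
    obtain ⟨_, _, _, _, _, _, _, hr⟩ := hd.exists_via
    exact ih.trans (hr.V_eq ▸ Finset.subset_union_left)

/-- The steps along an edge with attachment `att` and label `lab` once every nonterminal edge
is read as the skeleton of its label. -/
def EdgeStep (G : HRGrammar T) (att : List ℕ) : T ⊕ ℕ → ℕ → ℕ → Prop
  | .inl _, x, y => att.head? = some x ∧ y ∈ att.tail
  | .inr A, x, y => ∃ i j, G.skRel A i j ∧ att[i]? = some x ∧ att[j]? = some y

def SkStep (G : HRGrammar T) (g : HGraph (T ⊕ ℕ)) (x y : ℕ) : Prop :=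
  ∃ e ∈ g.E, G.EdgeStep (g.att e) (g.lab e) x y

theorem EdgeStep.mem_att {att : List ℕ} {lab : T ⊕ ℕ} {x y : ℕ} (h : G.EdgeStep att lab x y) :
    x ∈ att ∧ y ∈ att := by
  cases lab with
  | inl => exact ⟨List.mem_of_mem_head? h.1, List.mem_of_mem_tail h.2⟩
  | inr =>
    obtain ⟨i, j, -, hi, hj⟩ := h
    exact ⟨List.mem_of_getElem? hi, List.mem_of_getElem? hj⟩

theorem edgeStep_map_iff {att : List ℕ} {lab : T ⊕ ℕ} {a b : ℕ} :
    G.EdgeStep (att.map ρ) lab a b ↔ Relation.Map (G.EdgeStep att lab) ρ ρ a b := by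
  cases lab with
  | inl => simp [EdgeStep, Relation.Map, List.head?_map, ← List.map_tail]; aesop
  | inr => simp [EdgeStep, Relation.Map, List.getElem?_map]; aesop

theorem SkStep.mem_V (hatt : ∀ e ∈ g.E, ∀ v ∈ g.att e, v ∈ g.V) {x y : ℕ}
    (h : G.SkStep g x y) : x ∈ g.V ∧ y ∈ g.V := by
  obtain ⟨e, he, hxy⟩ := h
  exact ⟨hatt e he x hxy.mem_att.1, hatt e he y hxy.mem_att.2⟩

theorem skStep_eq_step (hg : Terminal g) : G.SkStep g = g.step := by
  ext x y
  refine exists_congr fun e => and_congr_right fun he => ?_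
  obtain ⟨a, ha⟩ := hg e he
  rw [ha]; rfl

theorem reflTransGen_skStep_iff_reaches (hg : Terminal g) {x y : ℕ} :
    ReflTransGen (G.SkStep g) x y ↔ g.Reaches x y := by
  rw [skStep_eq_step hg, HGraph.reaches_iff_reflTransGen]

theorem skStep_iff_of_mem (he₀ : e₀ ∈ g.E) {a b : ℕ} :
    G.SkStep g a b ↔
      (∃ e ∈ g.E.erase e₀, G.EdgeStep (g.att e) (g.lab e) a b) ∨
        G.EdgeStep (g.att e₀) (g.lab e₀) a b := by
  rw [SkStep, ← Finset.insert_erase he₀]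
  simp [or_comm]

theorem skStep_replace_iff (hr : IsReplacementVia g e₀ h g' ρ η) {a b : ℕ} :
    G.SkStep g' a b ↔
      (∃ e ∈ g.E.erase e₀, G.EdgeStep (g.att e) (g.lab e) a b) ∨
        Relation.Map (G.SkStep h) ρ ρ a b := by
  constructor
  · rintro ⟨e, he, hab⟩
    rcases hr.mem_E_iff.1 he with he | ⟨f, hf, rfl⟩
    · rw [(hr.old e he).1, (hr.old e he).2] at hab
      exact .inl ⟨e, he, hab⟩
    · rw [(hr.copy f hf).1, (hr.copy f hf).2, edgeStep_map_iff] at hab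
      obtain ⟨x, y, hxy, rfl, rfl⟩ := hab
      exact .inr ⟨x, y, ⟨f, hf, hxy⟩, rfl, rfl⟩
  · rintro (⟨e, he, hab⟩ | ⟨x, y, ⟨f, hf, hxy⟩, rfl, rfl⟩)
    · refine ⟨e, hr.mem_E_iff.2 (.inl he), ?_⟩
      rwa [(hr.old e he).1, (hr.old e he).2]
    · refine ⟨η f, hr.mem_E_iff.2 (.inr ⟨f, hf, rfl⟩), ?_⟩
      rw [(hr.copy f hf).1, (hr.copy f hf).2, edgeStep_map_iff]
      exact ⟨x, y, hxy, rfl, rfl⟩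

def SkeletonAgrees (G : HRGrammar T) (A : ℕ) : Prop :=
  ∀ i j, G.skRel A i j ↔ ∃ x y, (G.rhs A).ext[i]? = some x ∧ (G.rhs A).ext[j]? = some y ∧
    ReflTransGen (G.SkStep (G.rhs A)) x y

theorem edgeStep_map_ext_iff (hSk : G.SkeletonAgrees A) {a b : ℕ} :
    G.EdgeStep ((G.rhs A).ext.map ρ) (.inr A) a b ↔
      ∃ x ∈ (G.rhs A).ext, ∃ y ∈ (G.rhs A).ext, ρ x = a ∧ ρ y = b ∧
        ReflTransGen (G.SkStep (G.rhs A)) x y := by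
  simp only [EdgeStep, List.getElem?_map, Option.map_eq_some_iff]
  constructor
  · rintro ⟨i, j, hij, ⟨x', hx', rfl⟩, ⟨y', hy', rfl⟩⟩
    obtain ⟨x, y, hx, hy, hxy⟩ := (hSk i j).1 hij
    obtain rfl : x' = x := Option.some_injective _ (hx'.symm.trans hx)
    obtain rfl : y' = y := Option.some_injective _ (hy'.symm.trans hy)
    exact ⟨x', List.mem_of_getElem? hx, y', List.mem_of_getElem? hy, rfl, rfl, hxy⟩
  · rintro ⟨x, hx, y, hy, rfl, rfl, hxy⟩
    obtain ⟨i, hi⟩ := List.mem_iff_getElem?.1 hx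
    obtain ⟨j, hj⟩ := List.mem_iff_getElem?.1 hy
    exact ⟨i, j, (hSk i j).2 ⟨x, y, hi, hj, hxy⟩, ⟨x, hi, rfl⟩, ⟨y, hj, rfl⟩⟩

/-- A replacement step preserves reachability between the old nodes: the copy of `rhs A` meets
the old nodes only in its external nodes, and the edge it replaces already related exactly those
external nodes that the copy connects. -/
theorem reflTransGen_skStep_replace_iff (hWF : G.WF rkT) (hA : A ∈ G.NT)
    (hSk : G.SkeletonAgrees A) (hg : G.IsSentential rkT g) (he₀ : e₀ ∈ g.E)
    (hlab : g.lab e₀ = .inr A) (hr : IsReplacementVia g e₀ (G.rhs A) g' ρ η) {x y : ℕ}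
    (hx : x ∈ g.V) (hy : y ∈ g.V) :
    ReflTransGen (G.SkStep g) x y ↔ ReflTransGen (G.SkStep g') x y := by
  have hrhs := (hWF.rhs_wf hA).2.1
  refine Relation.reflTransGen_iff_of_glue (X := {v | v ∈ (G.rhs A).ext})
    (fun a b => ?_) (fun a b => skStep_replace_iff hr) ?_
    (fun a b hab => hab.mem_V fun f hf => (hrhs f hf).1) hr.injOn_V (fun v hv => ?_) hx hy
  · rw [skStep_iff_of_mem he₀, hlab, ← hr.map_ext, edgeStep_map_ext_iff hSk]
    rfl
  · rintro a b ⟨e, he, hab⟩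
    have := hg.att_mem e (Finset.mem_of_mem_erase he)
    exact ⟨this a hab.mem_att.1, this b hab.mem_att.2⟩
  · refine ⟨fun hρ => by_contra fun hv' => hr.fresh_V v hv hv' hρ, fun hv' => ?_⟩
    exact hg.att_mem e₀ he₀ _ (hr.map_ext ▸ List.mem_map_of_mem hv')

theorem reflTransGen_skStep_derives_iff (hWF : G.WF rkT) {𝒩 : Set ℕ}
    (hSk : ∀ A ∈ 𝒩, G.SkeletonAgrees A) (hclosed : ∀ A ∈ 𝒩, ∀ B, G.dep A B → B ∈ 𝒩)
    (hg : G.IsSentential rkT g) (hl : NTLabelsIn g 𝒩) (hd : ReflTransGen G.Derive g h)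
    {x y : ℕ} (hx : x ∈ g.V) (hy : y ∈ g.V) :
    ReflTransGen (G.SkStep g) x y ↔ ReflTransGen (G.SkStep h) x y := by
  induction hd with
  | refl => rfl
  | tail hd₁ hd₂ ih =>
    obtain ⟨e₀, he₀, A, hA, hlab, ρ, η, hr⟩ := hd₂.exists_via
    have hV := V_subset_of_derives hd₁
    have hSkA := hSk A (hl.derives hWF hclosed hd₁ e₀ he₀ A hlab)
    rw [ih, reflTransGen_skStep_replace_iff hWF hA hSkA (hg.derives hWF hd₁) he₀ hlab hr
      (hV hx) (hV hy)]

noncomputable def height (G : HRGrammar T) (A : ℕ) : ℕ :=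
  (G.NT.filter (Relation.TransGen G.dep A)).card

theorem height_lt_of_dep (hSL : G.SL) {B : ℕ} (h : G.dep A B) : G.height B < G.height A := by
  refine Finset.card_lt_card ⟨fun C hC => ?_, fun hsub => ?_⟩
  · rw [Finset.mem_filter] at hC ⊢
    exact ⟨hC.1, .head h hC.2⟩
  · exact hSL.1 B (Finset.mem_filter.1 (hsub (Finset.mem_filter.2 ⟨h.2.1, .single h⟩))).2

/-- A nonterminal edge outweighs all edges of the right-hand side of its label together
(`weight_rhs_lt`), so the weight decreases along derivation steps. -/
noncomputable def edgeWeight (G : HRGrammar T) : T ⊕ ℕ → ℕ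
  | .inl _ => 0
  | .inr B => (G.NT.sup (fun A => (G.rhs A).E.card) + 1) ^ (G.height B + 1)

noncomputable def weight (G : HRGrammar T) (g : HGraph (T ⊕ ℕ)) : ℕ :=
  ∑ e ∈ g.E, G.edgeWeight (g.lab e)

theorem weight_replace (he₀ : e₀ ∈ g.E) (hr : IsReplacementVia g e₀ h g' ρ η) :
    G.weight g' + G.edgeWeight (g.lab e₀) = G.weight g + G.weight h := by
  have hdisj : Disjoint (g.E.erase e₀) (h.E.image η) := by
    rw [Finset.disjoint_right]
    rintro _ hf' hfold
    obtain ⟨f, hf, rfl⟩ := Finset.mem_image.1 hf'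
    exact hr.fresh_E f hf (Finset.mem_of_mem_erase hfold)
  have hnew : ∑ e ∈ h.E.image η, G.edgeWeight (g'.lab e) = ∑ f ∈ h.E, G.edgeWeight (h.lab f) := by
    rw [Finset.sum_image fun a ha b hb hab => hr.injOn_E ha hb hab]
    exact Finset.sum_congr rfl fun f hf => by rw [(hr.copy f hf).2]
  have hold : ∑ e ∈ g.E.erase e₀, G.edgeWeight (g'.lab e) =
      ∑ e ∈ g.E.erase e₀, G.edgeWeight (g.lab e) :=
    Finset.sum_congr rfl fun e he => by rw [(hr.old e he).2]
  simp only [weight]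
  rw [hr.E_eq, Finset.sum_union hdisj, hnew, hold, ← Finset.sum_erase_add _ _ he₀]
  ring

theorem weight_rhs_lt (hWF : G.WF rkT) (hSL : G.SL) (hA : A ∈ G.NT) :
    G.weight (G.rhs A) < G.edgeWeight (.inr A) := by
  set K := G.NT.sup fun B => (G.rhs B).E.card
  have hedge : ∀ f ∈ (G.rhs A).E, G.edgeWeight ((G.rhs A).lab f) ≤ (K + 1) ^ G.height A := by
    intro f hf
    cases hl : (G.rhs A).lab f with
    | inl => exact Nat.zero_le _
    | inr C =>
      exact Nat.pow_le_pow_right K.succ_pos (height_lt_of_dep hSL (hWF.dep_of_lab_rhs hA hf hl))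
  calc G.weight (G.rhs A) ≤ (G.rhs A).E.card * (K + 1) ^ G.height A := by
        simpa [weight] using Finset.sum_le_sum hedge
    _ ≤ K * (K + 1) ^ G.height A :=
        Nat.mul_le_mul_right _ (Finset.le_sup (f := fun B => (G.rhs B).E.card) hA)
    _ < (K + 1) * (K + 1) ^ G.height A := Nat.mul_lt_mul_of_pos_right K.lt_succ_self (by positivity)
    _ = G.edgeWeight (.inr A) := by rw [edgeWeight, pow_succ']

theorem exists_isReplacementVia (hWF : G.WF rkT) (hA : A ∈ G.NT) (hg : G.IsSentential rkT g)
    (he₀ : e₀ ∈ g.E) (hlab : g.lab e₀ = .inr A) :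
    ∃ g' ρ η, IsReplacementVia g e₀ (G.rhs A) g' ρ η :=
  ⟨_, _, _, HGraph.isReplacementVia_replaceEdge
    (by rw [hWF.length_ext hA, hg.length_att_of_lab he₀ hlab]) (hWF.rhs_wf hA).2.2.2
    (hg.nodup_att e₀ he₀) (hg.att_mem e₀ he₀)⟩

theorem exists_derives_terminal (hWF : G.WF rkT) (hSL : G.SL) (hg : G.IsSentential rkT g)
    (hl : NTLabelsIn g G.NT) : ∃ h, ReflTransGen G.Derive g h ∧ Terminal h := by
  induction hn : G.weight g using Nat.strong_induction_on generalizing g with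
  | _ n ih =>
  by_cases hnt : ∃ e ∈ g.E, ∃ B, g.lab e = .inr B
  · obtain ⟨e, he, B, hB⟩ := hnt
    have hBNT := hl e he B hB
    obtain ⟨g', ρ, η, hr⟩ := exists_isReplacementVia hWF hBNT hg he hB
    have hlt : G.weight g' < n := by
      have := weight_replace (G := G) he hr
      have := weight_rhs_lt hWF hSL hBNT
      rw [hB] at *
      omega
    obtain ⟨h, hd, hterm⟩ := ih _ hlt (hg.replace hWF hBNT hr)
      (ntLabelsIn_replace hWF hBNT (fun e he => hl e (Finset.mem_of_mem_erase he))
        (fun C hC => hC.2.1) hr) rfl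
    exact ⟨h, .head (derive_of_via he hBNT hB hr) hd, hterm⟩
  · refine ⟨g, .refl, fun e he => ?_⟩
    cases hl : g.lab e with
    | inl a => exact ⟨a, rfl⟩
    | inr B => exact absurd ⟨e, he, B, hl⟩ hnt

theorem not_terminal_handle : ¬ Terminal (G.handle A) := fun h => by
  obtain ⟨a, ha⟩ := h 0 (Finset.mem_singleton_self 0)
  exact Sum.inr_ne_inl ha

theorem Derive.exists_via_of_handle (hd : G.Derive (G.handle A) g₁) :
    A ∈ G.NT ∧ ∃ ρ η, IsReplacementVia (G.handle A) 0 (G.rhs A) g₁ ρ η := by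
  obtain ⟨e, he, B, hB, hlab, hr⟩ := hd
  obtain rfl : e = 0 := Finset.mem_singleton.1 he
  obtain rfl : A = B := Sum.inr_injective hlab
  exact ⟨hB, isReplacement_iff_exists_via.1 hr⟩

theorem reflTransGen_skStep_replace_handle_iff (hWF : G.WF rkT) (hA : A ∈ G.NT)
    (hr : IsReplacementVia (G.handle A) 0 (G.rhs A) g₁ ρ η) {x y : ℕ}
    (hx : x ∈ (G.rhs A).V) (hy : y ∈ (G.rhs A).V) :
    ReflTransGen (G.SkStep g₁) (ρ x) (ρ y) ↔ ReflTransGen (G.SkStep (G.rhs A)) x y := by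
  have hstep : G.SkStep g₁ = Relation.Map (G.SkStep (G.rhs A)) ρ ρ := by
    ext a b
    rw [skStep_replace_iff hr]
    simp [handle]
  rw [hstep]
  exact Relation.reflTransGen_map_iff_of_injOn
    (fun a b hab => hab.mem_V fun f hf => ((hWF.rhs_wf hA).2.1 f hf).1) hr.injOn_V hx hy

theorem reflTransGen_skStep_derives_handle_iff (hWF : G.WF rkT) (hSL : G.SL)
    (hSk : ∀ B ∈ G.NT, G.height B < G.height A → G.SkeletonAgrees B)
    (hd : G.Derive (G.handle A) g₁) (hh : ReflTransGen G.Derive g₁ h) {i j x y : ℕ}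
    (hx : (G.rhs A).ext[i]? = some x) (hy : (G.rhs A).ext[j]? = some y) :
    ReflTransGen (G.SkStep h) i j ↔ ReflTransGen (G.SkStep (G.rhs A)) x y := by
  obtain ⟨hA, ρ, η, hr⟩ := hd.exists_via_of_handle
  have hport : ∀ k v, (G.rhs A).ext[k]? = some v → v ∈ (G.rhs A).V ∧ ρ v = k ∧ k ∈ g₁.V := by
    intro k v hv
    have hk : k < G.rkN A := hWF.length_ext hA ▸ (List.getElem?_eq_some_iff.1 hv).1
    refine ⟨(hWF.rhs_wf hA).2.2.1 v (List.mem_of_getElem? hv), ?_,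
      hr.V_eq ▸ Finset.mem_union_left _ (by simpa [handle])⟩
    simpa [hv, handle, hk] using congrArg (·[k]?) hr.map_ext
  obtain ⟨hxV, hρx, hi⟩ := hport i x hx
  obtain ⟨hyV, hρy, hj⟩ := hport j y hy
  let 𝒩 : Set ℕ := {B | B ∈ G.NT ∧ G.height B < G.height A}
  have hclosed : ∀ B ∈ 𝒩, ∀ C, G.dep B C → C ∈ 𝒩 :=
    fun B hB C hC => ⟨hC.2.1, (height_lt_of_dep hSL hC).trans hB.2⟩
  have hl₁ : NTLabelsIn g₁ 𝒩 :=
    ntLabelsIn_replace hWF hA (by simp [handle]) (fun B hB => ⟨hB.2.1, height_lt_of_dep hSL hB⟩) hr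
  rw [← reflTransGen_skStep_derives_iff hWF (fun B hB => hSk B hB.1 hB.2) hclosed
    (isSentential_handle.replace hWF hA hr) hl₁ hh hi hj, ← hρx, ← hρy,
    reflTransGen_skStep_replace_handle_iff hWF hA hr hxV hyV]

theorem skeletonAgrees (hWF : G.WF rkT) (hSL : G.SL) (hA : A ∈ G.NT) : G.SkeletonAgrees A := by
  induction hn : G.height A using Nat.strong_induction_on generalizing A with
  | _ n ih =>
  have hSk : ∀ B ∈ G.NT, G.height B < G.height A → G.SkeletonAgrees B :=
    fun B hB hlt => ih _ (hn ▸ hlt) hB rfl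
  have hlen := hWF.length_ext hA
  intro i j
  constructor
  · rintro ⟨hi, hj, h, hd, hterm, hij⟩
    obtain ⟨x, hx⟩ : ∃ x, (G.rhs A).ext[i]? = some x := ⟨_, List.getElem?_eq_getElem (hlen ▸ hi)⟩
    obtain ⟨y, hy⟩ : ∃ y, (G.rhs A).ext[j]? = some y := ⟨_, List.getElem?_eq_getElem (hlen ▸ hj)⟩
    rcases hd.cases_head with rfl | ⟨g₁, hd₁, hh⟩
    · exact absurd hterm not_terminal_handle
    · exact ⟨x, y, hx, hy, (reflTransGen_skStep_derives_handle_iff hWF hSL hSk hd₁ hh hx hy).1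
        ((reflTransGen_skStep_iff_reaches hterm).2 hij)⟩
  · rintro ⟨x, y, hx, hy, hxy⟩
    have he₀ : 0 ∈ (G.handle A).E := Finset.mem_singleton_self 0
    obtain ⟨g₁, ρ, η, hr⟩ :=
      exists_isReplacementVia hWF hA (isSentential_handle (rkT := rkT)) he₀ rfl
    have hd₁ := derive_of_via he₀ hA rfl hr
    obtain ⟨h, hh, hterm⟩ := exists_derives_terminal hWF hSL
      (isSentential_handle.replace hWF hA hr)
      (ntLabelsIn_replace hWF hA (by simp [handle]) (fun B hB => hB.2.1) hr)
    refine ⟨hlen ▸ (List.getElem?_eq_some_iff.1 hx).1, hlen ▸ (List.getElem?_eq_some_iff.1 hy).1,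
      h, .head hd₁ hh, hterm, (reflTransGen_skStep_iff_reaches (G := G) hterm).1 ?_⟩
    exact (reflTransGen_skStep_derives_handle_iff hWF hSL hSk hd₁ hh hx hy).2 hxy

theorem mem_startSk_E_iff (hWF : G.WF rkT) (ℓ : T ⊕ ℕ) {k : ℕ} :
    k ∈ (G.startSk ℓ).E ↔
      (∃ e ∈ G.S.E, (∃ a, G.S.lab e = .inl a) ∧ 2 * e = k) ∨
      ∃ e ∈ G.S.E, ∃ A i j, G.S.lab e = .inr A ∧ G.skRel A i j ∧
        2 * Nat.pair e (Nat.pair i j) + 1 = k := by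
  simp only [startSk, Finset.mem_union, Finset.mem_image, Finset.mem_filter, Finset.mem_product,
    Finset.mem_range, Prod.exists]
  refine or_congr (exists_congr fun e => ⟨?_, ?_⟩) ⟨?_, ?_⟩
  · rintro ⟨⟨he, hnt⟩, rfl⟩
    refine ⟨he, ?_, rfl⟩
    cases hl : G.S.lab e with
    | inl a => exact ⟨a, rfl⟩
    | inr B => exact absurd hl (hnt B (hWF.ntLabelsIn_start e he B hl))
  · rintro ⟨he, ⟨a, ha⟩, rfl⟩
    exact ⟨⟨he, fun B _ hB => Sum.inl_ne_inr (ha.symm.trans hB)⟩, rfl⟩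
  · rintro ⟨e, i, j, ⟨⟨he, -⟩, A, -, hA, hsk⟩, rfl⟩
    exact ⟨e, he, A, i, j, hA, hsk, rfl⟩
  · rintro ⟨e, he, A, i, j, hA, hsk, rfl⟩
    have hlen := (isSentential_start hWF).length_att_of_lab he hA
    have hsup := Finset.le_sup (f := fun e => (G.S.att e).length) he
    exact ⟨e, i, j, ⟨⟨he, (hlen ▸ hsk.1).trans_le hsup, (hlen ▸ hsk.2.1).trans_le hsup⟩,
      A, hWF.ntLabelsIn_start e he A hA, hA, hsk⟩, rfl⟩

theorem startSk_att_two_mul (ℓ : T ⊕ ℕ) (e : ℕ) : (G.startSk ℓ).att (2 * e) = G.S.att e := by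
  simp [startSk]

theorem startSk_att_two_mul_add_one (ℓ : T ⊕ ℕ) (e i j : ℕ) :
    (G.startSk ℓ).att (2 * Nat.pair e (Nat.pair i j) + 1) =
      [(G.S.att e).getD i 0, (G.S.att e).getD j 0] := by
  simp [startSk]

theorem step_startSk (hWF : G.WF rkT) (ℓ : T ⊕ ℕ) : (G.startSk ℓ).step = G.SkStep G.S := by
  have hS := isSentential_start hWF
  ext x y
  constructor
  · rintro ⟨k, hk, hx, hy⟩
    rcases (mem_startSk_E_iff hWF ℓ).1 hk with
      ⟨e, he, ⟨a, ha⟩, rfl⟩ | ⟨e, he, A, i, j, hA, hsk, rfl⟩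
    · rw [startSk_att_two_mul] at hx hy
      refine ⟨e, he, ?_⟩
      rw [ha]
      exact ⟨hx, hy⟩
    · rw [startSk_att_two_mul_add_one] at hx hy
      have hlen := hS.length_att_of_lab he hA
      refine ⟨e, he, ?_⟩
      rw [hA]
      refine ⟨i, j, hsk, ?_, ?_⟩
      · exact (List.getElem?_eq_some_iff_getD_eq (hlen ▸ hsk.1)).2 (by simpa using hx)
      · exact (List.getElem?_eq_some_iff_getD_eq (hlen ▸ hsk.2.1)).2
          (by rw [List.tail_cons, List.mem_singleton] at hy; exact hy.symm)
  · rintro ⟨e, he, hxy⟩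
    cases hl : G.S.lab e with
    | inl a =>
      rw [hl] at hxy
      refine ⟨2 * e, (mem_startSk_E_iff hWF ℓ).2 (.inl ⟨e, he, ⟨a, hl⟩, rfl⟩), ?_⟩
      rw [startSk_att_two_mul]
      exact hxy
    | inr A =>
      rw [hl] at hxy
      obtain ⟨i, j, hsk, hx, hy⟩ := hxy
      have hlen := hS.length_att_of_lab he hl
      refine ⟨_, (mem_startSk_E_iff hWF ℓ).2 (.inr ⟨e, he, A, i, j, hl, hsk, rfl⟩), ?_⟩
      rw [startSk_att_two_mul_add_one, (List.getElem?_eq_some_iff_getD_eq (hlen ▸ hsk.1)).1 hx,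
        (List.getElem?_eq_some_iff_getD_eq (hlen ▸ hsk.2.1)).1 hy]
      simp

end HRGrammar

/-- For all nodes `u, v` of the start graph `S` of an SL-HR
grammar `G`: `v` is reachable from `u` in `val(G)` iff `v` is reachable from
`u` in the graph `S'` obtained from `S` by replacing every nonterminal edge
by the skeleton of its label. -/
theorem start_skeleton_reachability {T : Type} (rkT : T → ℕ)
    (G : HRGrammar T) (hWF : G.WF rkT) (hSL : G.SL) (ℓ : T ⊕ ℕ)
    (u v : ℕ) (hu : u ∈ G.S.V) (hv : v ∈ G.S.V) :
    ∀ g ∈ G.Lang, (g.Reaches u v ↔ (G.startSk ℓ).Reaches u v) := by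
  rintro g ⟨hder, hterm⟩
  rw [← HRGrammar.reflTransGen_skStep_iff_reaches (G := G) hterm,
    HGraph.reaches_iff_reflTransGen, HRGrammar.step_startSk hWF]
  exact (HRGrammar.reflTransGen_skStep_derives_iff hWF
    (fun A hA => HRGrammar.skeletonAgrees hWF hSL hA) (fun _ _ _ hAB => hAB.2.1)
    (HRGrammar.isSentential_start hWF) hWF.ntLabelsIn_start hder hu hv).symm
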